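/- With the lifting setup below for both C and D, let ψ : C → D be a chain map of R-complexes. Then for each k with 1 ≤ k ≤ c, the degree −2 families (ψ_{n−2}∘t_{k,n})_n and (s_{k,n}∘ψ_n)_n are homotopic: there exist R-linear maps τ_n : C_n → D_{n−1} such that ψ_{n−2}∘t_{k,n} − s_{k,n}∘ψ_n = d^D_{n−1}∘τ_n + τ_{n−1}∘d^C_n for all n. -/

import Mathlib

/-!
Lift `ψ` to `Q`-linear maps `ψ̃` (possible since `C̃` is free). The defect `ψ̃ d̃ - d̃ ψ̃` vanishes
modulo `I = (f₁,…,f_c)`, so it equals `Σ_j f_j τ̃_j`. Substituting `d̃ d̃ = Σ_j f_j t̃_j` on both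
sides, the maps `E_j = ψ̃ t̃_j - s̃_j ψ̃ - d̃ τ̃_j - τ̃_j d̃` satisfy `Σ_j f_j E_j = 0`. As `f` is
regular on the free modules `D̃_n`, such a relation has all coefficients in `I D̃_n`, so each
`E_k` vanishes modulo `I`, and `τ̃_k ⊗ R` is the required homotopy.
-/

open TensorProduct

/-- The quotient ring `R = Q/(f₁,…,f_c)`. -/
abbrev Rquot (Q : Type) [CommRing Q] {c : ℕ} (f : Fin c → Q) : Type :=
  Q ⧸ Ideal.span (Set.range f)

open RingTheory.Sequence

section Koszul

variable {Q : Type*} [CommRing Q] {M : Type*} [AddCommGroup M] [Module Q M]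

theorem Ideal.ofList_ofFn {c : ℕ} (f : Fin c → Q) :
    Ideal.ofList (List.ofFn f) = Ideal.span (Set.range f) :=
  congrArg Ideal.span (Set.ext fun _ => List.mem_ofFn)

theorem Submodule.exists_eq_sum_smul_of_mem_span_range_smul_top {c : ℕ} {f : Fin c → Q} {x : M}
    (hx : x ∈ Ideal.span (Set.range f) • (⊤ : Submodule Q M)) :
    ∃ y : Fin c → M, x = ∑ k, f k • y k := by
  refine Submodule.smul_induction_on hx (fun r hr m _ => ?_) ?_
  · obtain ⟨a, rfl⟩ := (Submodule.mem_span_range_iff_exists_fun Q).mp hr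
    exact ⟨fun k => a k • m, by simp only [Finset.sum_smul, smul_smul, smul_eq_mul, mul_comm]⟩
  · rintro _ _ ⟨u, rfl⟩ ⟨v, rfl⟩
    exact ⟨u + v, by simp only [Pi.add_apply, smul_add, Finset.sum_add_distrib]⟩

namespace RingTheory.Sequence

/-- The first Koszul homology of a weakly regular sequence vanishes. -/
theorem IsWeaklyRegular.mem_smul_top_of_sum_smul_eq_zero :
    ∀ {c : ℕ} {f : Fin c → Q}, IsWeaklyRegular M (List.ofFn f) →
      ∀ {x : Fin c → M}, ∑ k, f k • x k = 0 →
        ∀ k, x k ∈ Ideal.span (Set.range f) • (⊤ : Submodule Q M)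
  | 0, _, _, _, _, k => k.elim0
  | c + 1, f, hreg, x, hx, k => by
    set I' := Ideal.span (Set.range (f ∘ Fin.castSucc))
    rw [List.ofFn_succ', List.concat_eq_append, isWeaklyRegular_append_iff,
      isWeaklyRegular_singleton_iff, Ideal.ofList_ofFn] at hreg
    obtain ⟨hreg', hlast⟩ := hreg
    rw [Fin.sum_univ_castSucc, add_eq_zero_iff_eq_neg'] at hx
    have hxlast : x (Fin.last c) ∈ I' • (⊤ : Submodule Q M) := by
      refine mem_of_isSMulRegular_quotient_of_smul_mem hlast ?_
      rw [hx]
      exact neg_mem (Submodule.sum_mem _ fun i _ =>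
        Submodule.smul_mem_smul (Ideal.subset_span ⟨i, rfl⟩) Submodule.mem_top)
    obtain ⟨y, hy⟩ := Submodule.exists_eq_sum_smul_of_mem_span_range_smul_top hxlast
    -- Trading `x (last)` for the `y i` gives a relation among the first `c` elements.
    have hrel : ∑ i, (f ∘ Fin.castSucc) i • (x (Fin.castSucc i) + f (Fin.last c) • y i) = 0 := by
      calc _ = ∑ i : Fin c, f i.castSucc • x i.castSucc + f (Fin.last c) • x (Fin.last c) := by
            simp only [hy, Finset.smul_sum, Function.comp_apply, smul_add, Finset.sum_add_distrib,
              smul_comm (f (Fin.last c))]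
        _ = 0 := by rw [hx, add_neg_cancel]
    have hI' : I' ≤ Ideal.span (Set.range f) :=
      Ideal.span_mono (Set.range_comp_subset_range _ _)
    induction k using Fin.lastCases with
    | last => exact Submodule.smul_mono_left hI' hxlast
    | cast i =>
      have h := Submodule.smul_mono_left hI' (mem_smul_top_of_sum_smul_eq_zero hreg' hrel i)
      rw [← add_sub_cancel_right (x i.castSucc) (f (Fin.last c) • y i)]
      exact sub_mem h (Submodule.smul_mem_smul (Ideal.subset_span ⟨_, rfl⟩) Submodule.mem_top)

theorem IsWeaklyRegular.of_flat_module {N : Type*} [AddCommGroup N] [Module Q N]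
    [Module.Flat Q N] {rs : List Q} (h : IsWeaklyRegular Q rs) : IsWeaklyRegular N rs :=
  (TensorProduct.rid Q N).isWeaklyRegular_congr rs |>.mp h.isWeaklyRegular_lTensor

end RingTheory.Sequence

end Koszul

section BaseChange

variable {Q : Type*} [CommRing Q] {M N : Type*} [AddCommGroup M] [Module Q M]
  [AddCommGroup N] [Module Q N]

theorem TensorProduct.one_tmul_eq_zero_iff_mem_smul_top (I : Ideal Q) (x : N) :
    (1 : Q ⧸ I) ⊗ₜ[Q] x = 0 ↔ x ∈ I • (⊤ : Submodule Q N) := by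
  rw [← quotTensorEquivQuotSMul_symm_mk I x,
    LinearEquiv.map_eq_zero_iff, Submodule.Quotient.mk_eq_zero]

theorem LinearMap.baseChange_quotient_eq_zero_iff (I : Ideal Q) (g : M →ₗ[Q] N) :
    g.baseChange (Q ⧸ I) = 0 ↔ ∀ x, g x ∈ I • (⊤ : Submodule Q N) := by
  refine ⟨fun hg x => ?_, fun hg => ?_⟩
  · rw [← TensorProduct.one_tmul_eq_zero_iff_mem_smul_top, ← LinearMap.baseChange_tmul, hg,
      LinearMap.zero_apply]
  · refine TensorProduct.AlgebraTensorModule.ext fun a x => ?_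
    rw [LinearMap.baseChange_tmul, LinearMap.zero_apply, ← mul_one a, ← smul_eq_mul,
      ← smul_tmul', (one_tmul_eq_zero_iff_mem_smul_top I (g x)).mpr (hg x), smul_zero]

theorem LinearMap.exists_baseChange_eq [Module.Free Q M] {A : Type*} [CommRing A] [Algebra Q A]
    (hA : Function.Surjective (algebraMap Q A)) (g : A ⊗[Q] M →ₗ[A] A ⊗[Q] N) :
    ∃ g' : M →ₗ[Q] N, g'.baseChange A = g := by
  let b := Module.Free.chooseBasis Q M
  choose y hy using fun i => mk_surjective Q N A hA (g (1 ⊗ₜ b i))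
  refine ⟨b.constr Q y, (b.baseChange A).ext fun i => ?_⟩
  rw [Module.Basis.baseChange_apply, LinearMap.baseChange_tmul, Module.Basis.constr_basis]
  exact hy i

theorem LinearMap.exists_eq_sum_smul_of_forall_mem_smul_top [Module.Free Q M] {c : ℕ}
    {f : Fin c → Q} {g : M →ₗ[Q] N}
    (hg : ∀ x, g x ∈ Ideal.span (Set.range f) • (⊤ : Submodule Q N)) :
    ∃ u : Fin c → M →ₗ[Q] N, g = ∑ k, f k • u k := by
  let b := Module.Free.chooseBasis Q M
  choose y hy using fun i => Submodule.exists_eq_sum_smul_of_mem_span_range_smul_top (hg (b i))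
  refine ⟨fun k => b.constr Q (y · k), b.ext fun i => ?_⟩
  simp only [hy i, LinearMap.sum_apply, LinearMap.smul_apply, Module.Basis.constr_basis]

end BaseChange

section Lifts

variable {Q : Type*} [CommRing Q] {c : ℕ} {f : Fin c → Q} {Ct Dt : ℤ → Type*}
  [∀ n, AddCommGroup (Ct n)] [∀ n, Module Q (Ct n)]
  [∀ n, AddCommGroup (Dt n)] [∀ n, Module Q (Dt n)]
  {dtC : ∀ n : ℤ, Ct (n + 1) →ₗ[Q] Ct n} {dtD : ∀ n : ℤ, Dt (n + 1) →ₗ[Q] Dt n}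
  {ttC : Fin c → ∀ n : ℤ, Ct (n + 1 + 1) →ₗ[Q] Ct n}
  {ttD : Fin c → ∀ n : ℤ, Dt (n + 1 + 1) →ₗ[Q] Dt n}

theorem sum_smul_homotopy_defect_eq_zero
    (hddC : ∀ (n : ℤ) (x : Ct (n + 1 + 1)), dtC n (dtC (n + 1) x) = ∑ k, f k • ttC k n x)
    (hddD : ∀ (n : ℤ) (x : Dt (n + 1 + 1)), dtD n (dtD (n + 1) x) = ∑ k, f k • ttD k n x)
    {ψ : ∀ n, Ct n →ₗ[Q] Dt n} {τ : ∀ n, Fin c → Ct (n + 1) →ₗ[Q] Dt n}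
    (hτ : ∀ (n : ℤ) (x : Ct (n + 1)), ψ n (dtC n x) - dtD n (ψ (n + 1) x) = ∑ k, f k • τ n k x)
    (n : ℤ) (x : Ct (n + 1 + 1)) :
    ∑ k, f k • (ψ n (ttC k n x) - ttD k n (ψ (n + 1 + 1) x) - dtD n (τ (n + 1) k x)
      - τ n k (dtC (n + 1) x)) = 0 := by
  have hψt : ∑ k, f k • ψ n (ttC k n x) = ψ n (dtC n (dtC (n + 1) x)) := by
    simp only [hddC, map_sum, map_smul]
  have htψ : ∑ k, f k • ttD k n (ψ (n + 1 + 1) x) = dtD n (dtD (n + 1) (ψ (n + 1 + 1) x)) :=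
    (hddD n _).symm
  have hdτ : ∑ k, f k • dtD n (τ (n + 1) k x) =
      dtD n (ψ (n + 1) (dtC (n + 1) x) - dtD (n + 1) (ψ (n + 1 + 1) x)) := by
    simp only [hτ, map_sum, map_smul]
  have hτd : ∑ k, f k • τ n k (dtC (n + 1) x) =
      ψ n (dtC n (dtC (n + 1) x)) - dtD n (ψ (n + 1) (dtC (n + 1) x)) :=
    (hτ n _).symm
  simp only [smul_sub, Finset.sum_sub_distrib, hψt, htψ, hdτ, hτd, map_sub]
  abel

end Lifts

theorem eisenbud_operators_commute_with_chain_maps_general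
    (Q : Type) [CommRing Q] (c : ℕ) (f : Fin c → Q)
    (hreg : RingTheory.Sequence.IsRegular Q (List.ofFn f))
    (Ct Dt : ℤ → Type)
    [∀ n, AddCommGroup (Ct n)] [∀ n, Module Q (Ct n)]
    [∀ n, AddCommGroup (Dt n)] [∀ n, Module Q (Dt n)]
    (hCfree : ∀ n, Module.Free Q (Ct n))
    (hDfree : ∀ n, Module.Free Q (Dt n))
    (dtC : ∀ n : ℤ, Ct (n + 1) →ₗ[Q] Ct n)
    (dtD : ∀ n : ℤ, Dt (n + 1) →ₗ[Q] Dt n)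
    (ttC : Fin c → ∀ n : ℤ, Ct (n + 1 + 1) →ₗ[Q] Ct n)
    (ttD : Fin c → ∀ n : ℤ, Dt (n + 1 + 1) →ₗ[Q] Dt n)
    (hddC : ∀ (n : ℤ) (x : Ct (n + 1 + 1)),
      dtC n (dtC (n + 1) x) = ∑ k, f k • ttC k n x)
    (hddD : ∀ (n : ℤ) (x : Dt (n + 1 + 1)),
      dtD n (dtD (n + 1) x) = ∑ k, f k • ttD k n x)
    (ψ : ∀ n : ℤ, (Rquot Q f ⊗[Q] Ct n) →ₗ[Rquot Q f] (Rquot Q f ⊗[Q] Dt n))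
    (hψ : ∀ (n : ℤ) (x : Rquot Q f ⊗[Q] Ct (n + 1)),
      ψ n ((dtC n).baseChange (Rquot Q f) x) =
        (dtD n).baseChange (Rquot Q f) (ψ (n + 1) x)) :
    ∀ k : Fin c,
      ∃ τ : ∀ n : ℤ, (Rquot Q f ⊗[Q] Ct (n + 1)) →ₗ[Rquot Q f] (Rquot Q f ⊗[Q] Dt n),
        ∀ (n : ℤ) (x : Rquot Q f ⊗[Q] Ct (n + 1 + 1)),
          ψ n ((ttC k n).baseChange (Rquot Q f) x) -
              (ttD k n).baseChange (Rquot Q f) (ψ (n + 1 + 1) x) =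
            (dtD n).baseChange (Rquot Q f) (τ (n + 1) x) +
              τ n ((dtC (n + 1)).baseChange (Rquot Q f) x) := by
  intro k
  choose ψ' hψ' using fun n => (ψ n).exists_baseChange_eq Ideal.Quotient.mk_surjective
  obtain rfl : ψ = fun n => (ψ' n).baseChange (Rquot Q f) := funext fun n => (hψ' n).symm
  have hchain : ∀ n x, ψ' n (dtC n x) - dtD n (ψ' (n + 1) x) ∈
      Ideal.span (Set.range f) • (⊤ : Submodule Q (Dt n)) := fun n x => by
    rw [← one_tmul_eq_zero_iff_mem_smul_top, tmul_sub, sub_eq_zero]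
    simpa using hψ n (1 ⊗ₜ x)
  choose τ' hτ' using fun n => LinearMap.exists_eq_sum_smul_of_forall_mem_smul_top
    (g := ψ' n ∘ₗ dtC n - dtD n ∘ₗ ψ' (n + 1)) (hchain n)
  have hrel := sum_smul_homotopy_defect_eq_zero hddC hddD (τ := τ') fun n x => by
    simpa using LinearMap.congr_fun (hτ' n) x
  refine ⟨fun n => (τ' n k).baseChange (Rquot Q f), fun n x => ?_⟩
  have hdefect : (ψ' n ∘ₗ ttC k n - ttD k n ∘ₗ ψ' (n + 1 + 1) - dtD n ∘ₗ τ' (n + 1) k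
      - τ' n k ∘ₗ dtC (n + 1)).baseChange (Rquot Q f) = 0 :=
    (LinearMap.baseChange_quotient_eq_zero_iff _ _).mpr fun y =>
      hreg.toIsWeaklyRegular.of_flat_module.mem_smul_top_of_sum_smul_eq_zero (hrel n y) k
  have hx := LinearMap.congr_fun hdefect x
  simp only [LinearMap.baseChange_sub, LinearMap.baseChange_comp, LinearMap.sub_apply,
    LinearMap.comp_apply, LinearMap.zero_apply] at hx
  rw [← sub_eq_zero, ← hx]
  abel

/-- `ψ ∘ t_k` is homotopic to `s_k ∘ ψ` for any chain map `ψ : C → D`. -/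
theorem eisenbud_operators_commute_with_chain_maps
    (Q : Type) [CommRing Q] (c : ℕ) (f : Fin c → Q)
    (hreg : RingTheory.Sequence.IsRegular Q (List.ofFn f))
    (Ct Dt : ℤ → Type)
    [∀ n, AddCommGroup (Ct n)] [∀ n, Module Q (Ct n)]
    [∀ n, AddCommGroup (Dt n)] [∀ n, Module Q (Dt n)]
    (hCfree : ∀ n, Module.Free Q (Ct n)) (hCfin : ∀ n, Module.Finite Q (Ct n))
    (hDfree : ∀ n, Module.Free Q (Dt n)) (hDfin : ∀ n, Module.Finite Q (Dt n))
    (dtC : ∀ n : ℤ, Ct (n + 1) →ₗ[Q] Ct n)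
    (dtD : ∀ n : ℤ, Dt (n + 1) →ₗ[Q] Dt n)
    (ttC : Fin c → ∀ n : ℤ, Ct (n + 1 + 1) →ₗ[Q] Ct n)
    (ttD : Fin c → ∀ n : ℤ, Dt (n + 1 + 1) →ₗ[Q] Dt n)
    (hddC : ∀ (n : ℤ) (x : Ct (n + 1 + 1)),
      dtC n (dtC (n + 1) x) = ∑ k, f k • ttC k n x)
    (hddD : ∀ (n : ℤ) (x : Dt (n + 1 + 1)),
      dtD n (dtD (n + 1) x) = ∑ k, f k • ttD k n x)
    (ψ : ∀ n : ℤ, (Rquot Q f ⊗[Q] Ct n) →ₗ[Rquot Q f] (Rquot Q f ⊗[Q] Dt n))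
    (hψ : ∀ (n : ℤ) (x : Rquot Q f ⊗[Q] Ct (n + 1)),
      ψ n ((dtC n).baseChange (Rquot Q f) x) =
        (dtD n).baseChange (Rquot Q f) (ψ (n + 1) x)) :
    ∀ k : Fin c,
      ∃ τ : ∀ n : ℤ, (Rquot Q f ⊗[Q] Ct (n + 1)) →ₗ[Rquot Q f] (Rquot Q f ⊗[Q] Dt n),
        ∀ (n : ℤ) (x : Rquot Q f ⊗[Q] Ct (n + 1 + 1)),
          ψ n ((ttC k n).baseChange (Rquot Q f) x) -
              (ttD k n).baseChange (Rquot Q f) (ψ (n + 1 + 1) x) =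
            (dtD n).baseChange (Rquot Q f) (τ (n + 1) x) +
              τ n ((dtC (n + 1)).baseChange (Rquot Q f) x) :=
  eisenbud_operators_commute_with_chain_maps_general Q c f hreg Ct Dt hCfree hDfree dtC dtD ttC ttD
    hddC hddD ψ hψ
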